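/- If A is a finite-dimensional ℂ-algebra presented as ℂQ̄ modulo the relation Σ_a[a,a*] + Σ_i μ_i e_i ω = 0 with ω central, and ρ is a d-dimensional module on which ω acts by t·id, then taking the trace over the module of the relation yields t·(μ·d) = 0. -/
import Mathlib


open Module

/-- Module-theoretic trace computation.  Let `V = ⊕_i e_i V` be a
finite-dimensional module (decomposition encoded by orthogonal idempotent
projections `P i` summing to the identity, with `d_i = dim (e_i V)`), on which
the relation `Σ_a [a, a*] + Σ_i μ_i e_i ω = 0` of the deformed preprojective
algebra holds, with `ω` acting by `t·id`.  Taking traces yields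
`t·(μ·d) = 0`; in particular if `μ·d ≠ 0` then `t = 0`. -/
theorem deformed_preprojective_trace_relation
    (I : Type*) [Fintype I] (α : Type*) [Fintype α]
    (V : Type*) [AddCommGroup V] [Module ℂ V] [FiniteDimensional ℂ V]
    (P : I → Module.End ℂ V)
    (hidem : ∀ i, P i ∘ₗ P i = P i)
    (horth : ∀ i j, i ≠ j → P i ∘ₗ P j = 0)
    (hsum : ∑ i, P i = LinearMap.id)
    (μ : I → ℂ) (t : ℂ) (ρ ρ' : α → Module.End ℂ V)
    (hrel : ∑ a, (ρ a * ρ' a - ρ' a * ρ a)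
      + t • (∑ i, μ i • P i) = 0) :
    t * (∑ i, μ i * (finrank ℂ (LinearMap.range (P i)) : ℂ)) = 0 ∧
    ((∑ i, μ i * (finrank ℂ (LinearMap.range (P i)) : ℂ)) ≠ 0 → t = 0) := by
  have htr : ∀ i, LinearMap.trace ℂ V (P i) = (finrank ℂ (LinearMap.range (P i)) : ℂ) := by
    intro i
    have hp : LinearMap.IsProj (LinearMap.range (P i)) (P i) := by
      constructor
      · intro x; exact LinearMap.mem_range_self _ x
      · rintro x ⟨y, rfl⟩
        exact congrFun (congrArg DFunLike.coe (hidem i)) y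
    exact hp.trace
  have h0 := congrArg (LinearMap.trace ℂ V) hrel
  rw [map_add, map_sum, map_zero] at h0
  have hc : ∀ a : α, LinearMap.trace ℂ V (ρ a * ρ' a - ρ' a * ρ a) = 0 := by
    intro a
    rw [map_sub, LinearMap.trace_mul_comm, sub_self]
  rw [Finset.sum_congr rfl (fun a _ => hc a), Finset.sum_const, smul_zero, zero_add,
    map_smul, map_sum] at h0
  simp only [map_smul, htr, smul_eq_mul] at h0
  constructor
  · exact h0
  · intro h
    rcases mul_eq_zero.mp h0 with ht | hs
    · exact ht
    · exact absurd hs h
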